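/- Let A be a Banach algebra with a bounded approximate identity (e_i), and let X be a neo-unital Banach A ⊗̂ A^{op}-bimodule with action •. Then the formulas (a ⊗ b) ∘ x = lim_i (a ⊗ e_i) • x • (e_i ⊗ b) and x ∘ (a ⊗ b) = lim_i (e_i ⊗ b) • x • (a ⊗ e_i) define well-defined limits and make X into a Banach A ⊗̂ A-bimodule. -/

import Mathlib

open Filter Topology MulOpposite

/-!
Write `(e_i)` for the approximate identity and `x = u • y • v`. Then
`(a ⊗ e_i) • x • (e_i ⊗ b) = ((a ⊗ e_i) u) • y • (v (e_i ⊗ b))`, and multiplication by `a ⊗ e_i` or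
`e_i ⊗ b` converges strongly on `A ⊗̂ Aᵒᵖ`, since it does on elementary tensors and is uniformly
bounded; so both nets converge at every `x`. For fixed `i` each net is a bilinear map of `(a, b)`,
bounded uniformly in `i`, so it lifts to `A ⊗̂ A`; the lifts converge strongly on the dense span of
the elementary tensors, hence everywhere. The bimodule laws are checked on elementary tensors by
computing iterated limits, e.g.
`((a ⊗ b) ∘ x) ∘ (c ⊗ d) = (a ⊗ d) • x • (c ⊗ b) = (a ⊗ b) ∘ (x ∘ (c ⊗ d))`.
-/

/-- A Banach `A`-bimodule structure on the Banach space `X`: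
`L a x = a • x` (left action), `R a x = x • a` (right action),
given as continuous bilinear maps. -/
structure BanachBimodule (A X : Type*) [NonUnitalNormedRing A] [NormedSpace ℂ A]
    [NormedAddCommGroup X] [NormedSpace ℂ X] where
  L : A →L[ℂ] X →L[ℂ] X
  R : A →L[ℂ] X →L[ℂ] X
  L_mul : ∀ a b : A, L (a * b) = (L a).comp (L b)
  R_mul : ∀ a b : A, R (a * b) = (R b).comp (R a)
  LR_comm : ∀ (a b : A) (x : X), R b (L a x) = L a (R b x)

/-- `D : A → X*` is a derivation into the dual Banach bimodule of `X`, written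
pointwise: `D(ab) = a·D(b) + D(a)·b` where `(a·f)(x) = f(x·a)`, `(f·a)(x) = f(a·x)`. -/
def IsDualDerivation {A X : Type*} [NonUnitalNormedRing A] [NormedSpace ℂ A]
    [NormedAddCommGroup X] [NormedSpace ℂ X] (σ : BanachBimodule A X)
    (D : A →L[ℂ] (X →L[ℂ] ℂ)) : Prop :=
  ∀ (a b : A) (x : X), D (a * b) x = D b (σ.R a x) + D a (σ.L b x)

/-- `D` is inner: `D a = a·f − f·a` for some `f ∈ X*`. -/
def IsInnerDualDerivation {A X : Type*} [NonUnitalNormedRing A] [NormedSpace ℂ A]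
    [NormedAddCommGroup X] [NormedSpace ℂ X] (σ : BanachBimodule A X)
    (D : A →L[ℂ] (X →L[ℂ] ℂ)) : Prop :=
  ∃ f : X →L[ℂ] ℂ, ∀ (a : A) (x : X), D a x = f (σ.R a x) - f (σ.L a x)

/-- A Banach algebra is amenable if every continuous derivation into every dual
Banach bimodule is inner. -/
def Amenable (A : Type*) [NonUnitalNormedRing A] [NormedSpace ℂ A] : Prop :=
  ∀ (X : Type) (_ : NormedAddCommGroup X) (_ : NormedSpace ℂ X) (_ : CompleteSpace X)
    (σ : BanachBimodule A X) (D : A →L[ℂ] (X →L[ℂ] ℂ)),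
    IsDualDerivation σ D → IsInnerDualDerivation σ D

/-- Weak amenability: every continuous derivation `D : A → A*` into the dual
bimodule (`(a·f)(x) = f(xa)`, `(f·a)(x) = f(ax)`) is inner. -/
def WeaklyAmenable (A : Type*) [NonUnitalNormedRing A] [NormedSpace ℂ A] : Prop :=
  ∀ D : A →L[ℂ] (A →L[ℂ] ℂ),
    (∀ a b x : A, D (a * b) x = D b (x * a) + D a (b * x)) →
    ∃ f : A →L[ℂ] ℂ, ∀ a x : A, D a x = f (x * a) - f (a * x)

/-- A bounded net in a normed space. -/
structure BddNet (X : Type*) [Norm X] where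
  ι : Type
  [dir : SemilatticeSup ι]
  [ne : Nonempty ι]
  z : ι → X
  C : ℝ
  bdd : ∀ i, ‖z i‖ ≤ C

/-- The `atTop` filter of the (directed) index of a bounded net. -/
def BddNet.filter {X : Type*} [Norm X] (S : BddNet X) : Filter S.ι :=
  letI := S.dir; Filter.atTop

/-- The bounded net `S` is a two-sided bounded approximate identity for `A`. -/
def IsBAI {A : Type*} [NonUnitalNormedRing A] (S : BddNet A) : Prop :=
  ∀ a : A, Tendsto (fun i => a * S.z i) S.filter (nhds a) ∧
           Tendsto (fun i => S.z i * a) S.filter (nhds a)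

/-- `A` has a (two-sided) bounded approximate identity. -/
def HasBAI (A : Type*) [NonUnitalNormedRing A] : Prop := ∃ S : BddNet A, IsBAI S

/-- `T`, together with the continuous bilinear map `ι`, is (a realization of) the
projective tensor product `A ⊗̂ B` of the Banach algebras `A` and `B`:
`ι` is multiplicative ((a⊗b)(c⊗d) = ac⊗bd), satisfies the cross-norm estimate,
has dense linear span, and has the universal (norm-decreasing lifting) property
of the projective tensor norm. -/
structure IsProjTensorProduct (A B T : Type*)
    [NonUnitalNormedRing A] [NormedSpace ℂ A] [NonUnitalNormedRing B] [NormedSpace ℂ B]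
    [NonUnitalNormedRing T] [NormedSpace ℂ T] [CompleteSpace T] where
  ι : A →L[ℂ] B →L[ℂ] T
  norm_ι : ∀ a b, ‖ι a b‖ ≤ ‖a‖ * ‖b‖
  ι_mul : ∀ (a c : A) (b d : B), ι a b * ι c d = ι (a * c) (b * d)
  dense_span : Dense (Submodule.span ℂ (Set.range fun p : A × B => ι p.1 p.2) : Set T)
  lift : ∀ (E : Type) (_ : NormedAddCommGroup E) (_ : NormedSpace ℂ E) (_ : CompleteSpace E)
    (φ : A →L[ℂ] B →L[ℂ] E), ∃ Φ : T →L[ℂ] E, (∀ a b, Φ (ι a b) = φ a b) ∧ ‖Φ‖ ≤ ‖φ‖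

section Limits

variable {𝕜 : Type*} [NontriviallyNormedField 𝕜] {E F G : Type*}
  [NormedAddCommGroup E] [NormedSpace 𝕜 E] [NormedAddCommGroup F] [NormedSpace 𝕜 F]
  [NormedAddCommGroup G] [NormedSpace 𝕜 G] {ι : Type*} {l : Filter ι}

theorem Filter.Tendsto.clm_apply₂ (f : E →L[𝕜] F →L[𝕜] G) {u : ι → E} {v : ι → F} {a : E}
    {b : F} (hu : Tendsto u l (𝓝 a)) (hv : Tendsto v l (𝓝 b)) :
    Tendsto (fun i => f (u i) (v i)) l (𝓝 (f a b)) :=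
  ((by fun_prop : Continuous fun w : E × F => f w.1 w.2).tendsto (a, b)).comp (hu.prodMk_nhds hv)

theorem exists_tendsto_apply_of_dense_span [l.NeBot] [CompleteSpace F] {M : ι → E →L[𝕜] F}
    {K : ℝ} (hK : ∀ i, ‖M i‖ ≤ K) {D : Set E} (hD : Dense (Submodule.span 𝕜 D : Set E))
    (hconv : ∀ d ∈ D, ∃ y, Tendsto (fun i => M i d) l (𝓝 y)) (t : E) :
    ∃ y, Tendsto (fun i => M i t) l (𝓝 y) := by
  have hspan : ∀ s ∈ Submodule.span 𝕜 D, ∃ y, Tendsto (fun i => M i s) l (𝓝 y) := by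
    intro s hs
    induction hs using Submodule.span_induction with
    | mem s hs => exact hconv s hs
    | zero => exact ⟨0, by simp⟩
    | add u v _ _ hu hv =>
      obtain ⟨y, hy⟩ := hu
      obtain ⟨z, hz⟩ := hv
      exact ⟨y + z, by simpa using hy.add hz⟩
    | smul c u _ hu =>
      obtain ⟨y, hy⟩ := hu
      exact ⟨c • y, by simpa using hy.const_smul c⟩
  refine cauchy_map_iff_exists_tendsto.mp
    (Metric.cauchy_iff.mpr ⟨inferInstance, fun ε hε => ?_⟩)
  obtain ⟨δ, hδ, hKδ⟩ := exists_pos_mul_lt (by positivity : 0 < ε / 3) K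
  obtain ⟨s, hs, hts⟩ := Metric.mem_closure_iff.mp (hD t) δ hδ
  obtain ⟨y, hy⟩ := hspan s hs
  obtain ⟨U, hU, hUs⟩ := (Metric.cauchy_iff.mp hy.cauchy_map).2 (ε / 3) (by positivity)
  have hnear : ∀ i, dist (M i t) (M i s) < ε / 3 := fun i =>
    calc dist (M i t) (M i s) = ‖M i (t - s)‖ := by rw [dist_eq_norm, map_sub]
      _ ≤ K * ‖t - s‖ := (M i).le_of_opNorm_le (hK i) _
      _ ≤ K * δ := by
        have hK0 : 0 ≤ K := (norm_nonneg _).trans (hK i)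
        gcongr
        rw [← dist_eq_norm]
        exact hts.le
      _ < ε / 3 := hKδ
  refine ⟨_, image_mem_map hU, ?_⟩
  rintro _ ⟨i, hi, rfl⟩ _ ⟨j, hj, rfl⟩
  calc dist (M i t) (M j t)
        ≤ dist (M i t) (M i s) + dist (M i s) (M j s) + dist (M j s) (M j t) :=
          dist_triangle4 _ _ _ _
    _ < ε / 3 + ε / 3 + ε / 3 := by
        gcongr
        · exact hnear i
        · exact hUs _ hi _ hj
        · rw [dist_comm]; exact hnear j
    _ = ε := by ring

theorem exists_tendsto_clm₂ [l.NeBot] {B : ι → E →L[𝕜] F →L[𝕜] G} {K : ℝ}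
    (hK : ∀ i, ‖B i‖ ≤ K) (hconv : ∀ e f, ∃ y, Tendsto (fun i => B i e f) l (𝓝 y)) :
    ∃ β : E →L[𝕜] F →L[𝕜] G, ∀ e f, Tendsto (fun i => B i e f) l (𝓝 (β e f)) := by
  choose φ hφ using hconv
  have lim_eq {e f y} (h : Tendsto (fun i => B i e f) l (𝓝 y)) : φ e f = y :=
    tendsto_nhds_unique (hφ e f) h
  refine ⟨LinearMap.mkContinuous₂ (LinearMap.mk₂ 𝕜 φ ?_ ?_ ?_ ?_) K ?_, hφ⟩
  · exact fun e e' f => lim_eq (by simpa using (hφ e f).add (hφ e' f))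
  · exact fun c e f => lim_eq (by simpa using (hφ e f).const_smul c)
  · exact fun e f f' => lim_eq (by simpa using (hφ e f).add (hφ e f'))
  · exact fun c e f => lim_eq (by simpa using (hφ e f).const_smul c)
  · exact fun e f => le_of_tendsto' (hφ e f).norm fun i =>
      (B i).le_of_opNorm₂_le_of_le (hK i) le_rfl le_rfl

theorem tendsto_nhds_unique_of_iterated {X Y κ : Type*} [TopologicalSpace X]
    [TopologicalSpace Y] [T2Space Y] {l' : Filter κ} [l.NeBot] [l'.NeBot] {F : ι → X → Y}
    {g : κ → X} {x : X} {φ : ι → Y} {y z : Y} (hF : ∀ i, Continuous (F i))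
    (hg : Tendsto g l' (𝓝 x)) (hφ : ∀ i, Tendsto (fun j => F i (g j)) l' (𝓝 (φ i)))
    (hy : Tendsto (fun i => F i x) l (𝓝 y)) (hz : Tendsto φ l (𝓝 z)) : y = z := by
  have hφx : φ = fun i => F i x :=
    funext fun i => tendsto_nhds_unique (hφ i) (((hF i).tendsto x).comp hg)
  exact tendsto_nhds_unique hy (hφx ▸ hz)

end Limits

instance BddNet.filter_neBot {X : Type*} [Norm X] (S : BddNet X) : S.filter.NeBot := by
  let _ := S.dir
  have _ := S.ne
  exact atTop_neBot

theorem IsBAI.tendsto_op_mul {A : Type*} [NonUnitalNormedRing A] {S : BddNet A} (hS : IsBAI S)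
    (q : Aᵐᵒᵖ) : Tendsto (fun i => op (S.z i) * q) S.filter (𝓝 q) := by
  have h := (continuous_op.tendsto _).comp (hS q.unop).1
  simpa only [Function.comp_def, op_mul, op_unop] using h

theorem IsBAI.tendsto_mul_op {A : Type*} [NonUnitalNormedRing A] {S : BddNet A} (hS : IsBAI S)
    (q : Aᵐᵒᵖ) : Tendsto (fun i => q * op (S.z i)) S.filter (𝓝 q) := by
  have h := (continuous_op.tendsto _).comp (hS q.unop).2
  simpa only [Function.comp_def, op_mul, op_unop] using h

namespace IsProjTensorProduct

variable {A B T : Type*} [NonUnitalNormedRing A] [NormedSpace ℂ A] [NonUnitalNormedRing B]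
  [NormedSpace ℂ B] [NonUnitalNormedRing T] [NormedSpace ℂ T] [CompleteSpace T]
  (P : IsProjTensorProduct A B T)

theorem ext {G : Type*} [NormedAddCommGroup G] [NormedSpace ℂ G] {f g : T →L[ℂ] G}
    (h : ∀ a b, f (P.ι a b) = g (P.ι a b)) : f = g :=
  ContinuousLinearMap.ext_on P.dense_span (by rintro _ ⟨⟨a, b⟩, rfl⟩; exact h a b)

theorem ext₂ {G : Type*} [NormedAddCommGroup G] [NormedSpace ℂ G] {f g : T →L[ℂ] T →L[ℂ] G}
    (h : ∀ a b c d, f (P.ι a b) (P.ι c d) = g (P.ι a b) (P.ι c d)) : f = g :=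
  P.ext fun a b => P.ext fun c d => h a b c d

/-- The field `lift` only reaches Banach spaces in `Type`; applied to `g ∘ φ` for functionals `g`,
it still gives the projective norm estimate in any Banach space, by Hahn–Banach. -/
theorem exists_lift {G : Type*} [NormedAddCommGroup G] [NormedSpace ℂ G] [CompleteSpace G]
    (φ : A →L[ℂ] B →L[ℂ] G) {K : ℝ} (hK : 0 ≤ K) (hφ : ∀ a b, ‖φ a b‖ ≤ K * ‖a‖ * ‖b‖) :
    ∃ Φ : T →L[ℂ] G, (∀ a b, Φ (P.ι a b) = φ a b) ∧ ‖Φ‖ ≤ K := by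
  set e := Finsupp.linearCombination ℂ fun p : A × B => P.ι p.1 p.2
  set f := Finsupp.linearCombination ℂ fun p : A × B => φ p.1 p.2
  have he : DenseRange e := by
    simpa only [DenseRange, ← LinearMap.coe_range, e, Finsupp.range_linearCombination] using
      P.dense_span
  have hf : ∀ c, ‖f c‖ ≤ K * ‖e c‖ := by
    intro c
    refine NormedSpace.norm_le_dual_bound ℂ _ (by positivity) fun g => ?_
    have hgφ : ‖(ContinuousLinearMap.compL ℂ B G ℂ g).comp φ‖ ≤ ‖g‖ * K :=
      ContinuousLinearMap.opNorm_le_bound₂ _ (by positivity) fun a b =>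
        (g.le_opNorm _).trans <| by
          rw [mul_assoc, mul_assoc]
          gcongr
          simpa [mul_assoc] using hφ a b
    obtain ⟨Ψ, hΨ, hΨφ⟩ := P.lift ℂ inferInstance inferInstance inferInstance
      ((ContinuousLinearMap.compL ℂ B G ℂ g).comp φ)
    have hgf : g (f c) = Ψ (e c) := by
      rw [← ContinuousLinearMap.coe_coe g, Finsupp.apply_linearCombination,
        ← ContinuousLinearMap.coe_coe Ψ, Finsupp.apply_linearCombination]
      congr 2
      funext p
      simp [hΨ]
    calc ‖g (f c)‖ = ‖Ψ (e c)‖ := by rw [hgf]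
      _ ≤ ‖g‖ * K * ‖e c‖ := Ψ.le_of_opNorm_le (hΨφ.trans hgφ) _
      _ = K * ‖e c‖ * ‖g‖ := by ring
  refine ⟨f.extendOfNorm e, fun a b => ?_, LinearMap.opNorm_extendOfNorm_le he hK hf⟩
  simpa [e, f] using LinearMap.extendOfNorm_eq he ⟨_, hf⟩ (Finsupp.single (a, b) 1)

theorem exists_lift_tendsto {G H : Type*} [NormedAddCommGroup G] [NormedSpace ℂ G]
    [NormedAddCommGroup H] [NormedSpace ℂ H] [CompleteSpace H] {ι : Type*} {l : Filter ι}
    [l.NeBot] {M : ι → A →L[ℂ] B →L[ℂ] G →L[ℂ] H} {K : ℝ} (hK : 0 ≤ K)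
    (hM : ∀ i a b, ‖M i a b‖ ≤ K * ‖a‖ * ‖b‖)
    (hconv : ∀ a b x, ∃ y, Tendsto (fun i => M i a b x) l (𝓝 y)) :
    ∃ τ : T →L[ℂ] G →L[ℂ] H, ∀ a b x, Tendsto (fun i => M i a b x) l (𝓝 (τ (P.ι a b) x)) := by
  choose Φ hΦ hΦK using fun i => P.exists_lift (M i) hK (hM i)
  have hconvΦ : ∀ t x, ∃ y, Tendsto (fun i => Φ i t x) l (𝓝 y) := by
    intro t x
    refine exists_tendsto_apply_of_dense_span (M := fun i => (Φ i).flip x) (K := K * ‖x‖)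
      (fun i => ?_) P.dense_span ?_ t
    · refine ((Φ i).flip.le_opNorm x).trans ?_
      rw [ContinuousLinearMap.opNorm_flip]
      gcongr
      exact hΦK i
    · rintro _ ⟨⟨a, b⟩, rfl⟩
      simpa [hΦ] using hconv a b x
  obtain ⟨τ, hτ⟩ := exists_tendsto_clm₂ hΦK hconvΦ
  exact ⟨τ, fun a b x => by simpa [hΦ] using hτ (P.ι a b) x⟩

section Multiplication

variable [IsScalarTower ℂ T T] [SMulCommClass ℂ T T] {ι : Type*} {l : Filter ι} [l.NeBot]
  {s : ι → A} {t : ι → B} {C : ℝ}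

theorem exists_tendsto_ι_mul (hst : ∀ i, ‖s i‖ * ‖t i‖ ≤ C)
    (hs : ∀ p, ∃ y, Tendsto (fun i => s i * p) l (𝓝 y))
    (ht : ∀ q, ∃ y, Tendsto (fun i => t i * q) l (𝓝 y)) (u : T) :
    ∃ y, Tendsto (fun i => P.ι (s i) (t i) * u) l (𝓝 y) := by
  have hmul : ∀ i, ‖ContinuousLinearMap.mul ℂ T (P.ι (s i) (t i))‖ ≤ C := fun i =>
    ((ContinuousLinearMap.opNorm_mul_apply_le ℂ T _).trans (P.norm_ι _ _)).trans (hst i)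
  refine exists_tendsto_apply_of_dense_span hmul P.dense_span ?_ u
  rintro _ ⟨⟨p, q⟩, rfl⟩
  obtain ⟨a, ha⟩ := hs p
  obtain ⟨b, hb⟩ := ht q
  exact ⟨P.ι a b, by
    simpa only [ContinuousLinearMap.mul_apply', P.ι_mul] using ha.clm_apply₂ P.ι hb⟩

theorem exists_tendsto_mul_ι (hst : ∀ i, ‖s i‖ * ‖t i‖ ≤ C)
    (hs : ∀ p, ∃ y, Tendsto (fun i => p * s i) l (𝓝 y))
    (ht : ∀ q, ∃ y, Tendsto (fun i => q * t i) l (𝓝 y)) (u : T) :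
    ∃ y, Tendsto (fun i => u * P.ι (s i) (t i)) l (𝓝 y) := by
  have hmul : ∀ i, ‖(ContinuousLinearMap.mul ℂ T).flip (P.ι (s i) (t i))‖ ≤ C := fun i => by
    have hC := (P.norm_ι _ _).trans (hst i)
    refine ContinuousLinearMap.opNorm_le_bound _ ((norm_nonneg _).trans hC) fun v => ?_
    rw [mul_comm]
    exact (norm_mul_le _ _).trans (by gcongr)
  refine exists_tendsto_apply_of_dense_span hmul P.dense_span ?_ u
  rintro _ ⟨⟨p, q⟩, rfl⟩
  obtain ⟨a, ha⟩ := hs p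
  obtain ⟨b, hb⟩ := ht q
  exact ⟨P.ι a b, by simpa only [ContinuousLinearMap.flip_apply, ContinuousLinearMap.mul_apply',
    P.ι_mul] using ha.clm_apply₂ P.ι hb⟩

end Multiplication

end IsProjTensorProduct

namespace BanachBimodule

section Actions

variable {T X : Type*} [NonUnitalNormedRing T] [NormedSpace ℂ T] [NormedAddCommGroup X]
  [NormedSpace ℂ X] (σ : BanachBimodule T X)

theorem L_R_L_R (s r u v : T) (y : X) :
    σ.L s (σ.R r (σ.L u (σ.R v y))) = σ.L (s * u) (σ.R (v * r) y) := by
  rw [σ.LR_comm, σ.L_mul, σ.R_mul]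
  rfl

theorem exists_tendsto_L_R (hneo : ∀ x : X, ∃ (u v : T) (y : X), x = σ.L u (σ.R v y))
    {ι : Type*} {l : Filter ι} {s r : ι → T}
    (hs : ∀ u, ∃ y, Tendsto (fun i => s i * u) l (𝓝 y))
    (hr : ∀ v, ∃ y, Tendsto (fun i => v * r i) l (𝓝 y)) (x : X) :
    ∃ z, Tendsto (fun i => σ.L (s i) (σ.R (r i) x)) l (𝓝 z) := by
  obtain ⟨u, v, y, rfl⟩ := hneo x
  obtain ⟨p, hp⟩ := hs u
  obtain ⟨q, hq⟩ := hr v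
  simp_rw [σ.L_R_L_R]
  have hcont : Continuous fun w : T × T => σ.L w.1 (σ.R w.2 y) := by fun_prop
  exact ⟨_, (hcont.tendsto (p, q)).comp (hp.prodMk_nhds hq)⟩

end Actions

section Sandwich

variable {A T X : Type*} [NonUnitalNormedRing A] [NormedSpace ℂ A] [NonUnitalNormedRing T]
  [NormedSpace ℂ T] [CompleteSpace T] [NormedAddCommGroup X] [NormedSpace ℂ X]
  (σ : BanachBimodule T X) (P : IsProjTensorProduct A Aᵐᵒᵖ T)

/-- `x ↦ (p ⊗ q) • x • (r ⊗ s)`. -/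
noncomputable def sandwich (p q r s : A) : X →L[ℂ] X :=
  (σ.L (P.ι p (op q))).comp (σ.R (P.ι r (op s)))

theorem sandwich_sandwich (a q' r' b p q r s : A) (x : X) :
    σ.sandwich P a q' r' b (σ.sandwich P p q r s x) =
      σ.sandwich P (a * p) (q * q') (r * r') (b * s) x := by
  simp only [sandwich, ContinuousLinearMap.comp_apply, L_R_L_R, P.ι_mul, op_mul]

theorem tendsto_sandwich {ι : Type*} {l : Filter ι} {p q r s : ι → A} {p₀ q₀ r₀ s₀ : A}
    (hp : Tendsto p l (𝓝 p₀)) (hq : Tendsto q l (𝓝 q₀)) (hr : Tendsto r l (𝓝 r₀))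
    (hs : Tendsto s l (𝓝 s₀)) (x : X) :
    Tendsto (fun i => σ.sandwich P (p i) (q i) (r i) (s i) x) l
      (𝓝 (σ.sandwich P p₀ q₀ r₀ s₀ x)) := by
  have hcont : Continuous fun w : A × A × A × A => σ.sandwich P w.1 w.2.1 w.2.2.1 w.2.2.2 x := by
    simp only [sandwich, ContinuousLinearMap.comp_apply]
    fun_prop
  have h := (hcont.tendsto (p₀, q₀, r₀, s₀)).comp
    (hp.prodMk_nhds (hq.prodMk_nhds (hr.prodMk_nhds hs)))
  exact h

theorem norm_sandwich_le (p q r s : A) :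
    ‖σ.sandwich P p q r s‖ ≤ ‖σ.L‖ * ‖σ.R‖ * (‖p‖ * ‖q‖) * (‖r‖ * ‖s‖) := by
  have hι : ∀ a b : A, ‖P.ι a (op b)‖ ≤ ‖a‖ * ‖b‖ := fun a b => P.norm_ι a (op b)
  calc ‖σ.sandwich P p q r s‖ ≤ ‖σ.L (P.ι p (op q))‖ * ‖σ.R (P.ι r (op s))‖ :=
        ContinuousLinearMap.opNorm_comp_le _ _
    _ ≤ (‖σ.L‖ * (‖p‖ * ‖q‖)) * (‖σ.R‖ * (‖r‖ * ‖s‖)) := by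
        gcongr
        · exact σ.L.le_of_opNorm_le le_rfl _ |>.trans (by gcongr; exact hι p q)
        · exact σ.R.le_of_opNorm_le le_rfl _ |>.trans (by gcongr; exact hι r s)
    _ = ‖σ.L‖ * ‖σ.R‖ * (‖p‖ * ‖q‖) * (‖r‖ * ‖s‖) := by ring

/-- `σ.sandwichLeft P e a b = σ.sandwich P a e e b`. -/
noncomputable def sandwichLeft (e : A) : A →L[ℂ] A →L[ℂ] X →L[ℂ] X :=
  (ContinuousLinearMap.compL ℂ X X X).bilinearComp (σ.L.comp (P.ι.flip (op e)))
    (σ.R.comp ((P.ι e).comp (opContinuousLinearEquiv ℂ : A ≃L[ℂ] Aᵐᵒᵖ).toContinuousLinearMap))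

/-- `σ.sandwichRight P e a b = σ.sandwich P e b a e`. -/
noncomputable def sandwichRight (e : A) : A →L[ℂ] A →L[ℂ] X →L[ℂ] X :=
  ((ContinuousLinearMap.compL ℂ X X X).bilinearComp
    (σ.L.comp ((P.ι e).comp (opContinuousLinearEquiv ℂ : A ≃L[ℂ] Aᵐᵒᵖ).toContinuousLinearMap))
    (σ.R.comp (P.ι.flip (op e)))).flip

variable {T' : Type*} [NonUnitalNormedRing T'] [NormedSpace ℂ T'] [CompleteSpace T']
  (Q : IsProjTensorProduct A A T')

def IsLeftActionLimit (S : BddNet A) (τ : T' →L[ℂ] X →L[ℂ] X) : Prop :=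
  ∀ a b x, Tendsto (fun i => σ.sandwich P a (S.z i) (S.z i) b x) S.filter (𝓝 (τ (Q.ι a b) x))

def IsRightActionLimit (S : BddNet A) (τ : T' →L[ℂ] X →L[ℂ] X) : Prop :=
  ∀ a b x, Tendsto (fun i => σ.sandwich P (S.z i) b a (S.z i) x) S.filter (𝓝 (τ (Q.ι a b) x))

variable {σ P Q} {S : BddNet A} {τL τR : T' →L[ℂ] X →L[ℂ] X}

theorem IsLeftActionLimit.map_mul (hτL : σ.IsLeftActionLimit P Q S τL) (hS : IsBAI S)
    (a b c d : A) : τL (Q.ι (a * c) (b * d)) = (τL (Q.ι a b)).comp (τL (Q.ι c d)) := by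
  ext x
  refine (tendsto_nhds_unique_of_iterated
    (fun i => (σ.sandwich P a (S.z i) (S.z i) b).continuous)
    (hτL c d x) (fun i => ?_) (hτL a b _) (hτL (a * c) (b * d) x)).symm
  simp_rw [sandwich_sandwich]
  exact σ.tendsto_sandwich P tendsto_const_nhds (hS _).2 (hS _).2 tendsto_const_nhds x

theorem IsRightActionLimit.map_mul (hτR : σ.IsRightActionLimit P Q S τR) (hS : IsBAI S)
    (a b c d : A) : τR (Q.ι (a * c) (b * d)) = (τR (Q.ι c d)).comp (τR (Q.ι a b)) := by
  ext x
  refine (tendsto_nhds_unique_of_iterated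
    (fun j => (σ.sandwich P (S.z j) d c (S.z j)).continuous)
    (hτR a b x) (fun j => ?_) (hτR c d _) (hτR (a * c) (b * d) x)).symm
  simp_rw [sandwich_sandwich]
  exact σ.tendsto_sandwich P (hS _).1 tendsto_const_nhds tendsto_const_nhds (hS _).1 x

theorem right_action_left_action (hτL : σ.IsLeftActionLimit P Q S τL)
    (hτR : σ.IsRightActionLimit P Q S τR) (hS : IsBAI S) (a b c d : A) (x : X) :
    τR (Q.ι c d) (τL (Q.ι a b) x) = σ.sandwich P a d c b x := by
  refine tendsto_nhds_unique_of_iterated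
    (fun j => (σ.sandwich P (S.z j) d c (S.z j)).continuous) (hτL a b x) (fun j => ?_) (hτR c d _)
    (σ.tendsto_sandwich P (hS a).2 tendsto_const_nhds tendsto_const_nhds (hS b).2 x)
  simp_rw [sandwich_sandwich]
  exact σ.tendsto_sandwich P tendsto_const_nhds (hS d).2 (hS c).2 tendsto_const_nhds x

theorem left_action_right_action (hτL : σ.IsLeftActionLimit P Q S τL)
    (hτR : σ.IsRightActionLimit P Q S τR) (hS : IsBAI S) (a b c d : A) (x : X) :
    τL (Q.ι a b) (τR (Q.ι c d) x) = σ.sandwich P a d c b x := by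
  refine tendsto_nhds_unique_of_iterated
    (fun i => (σ.sandwich P a (S.z i) (S.z i) b).continuous) (hτR c d x) (fun i => ?_) (hτL a b _)
    (σ.tendsto_sandwich P tendsto_const_nhds (hS d).1 (hS c).1 tendsto_const_nhds x)
  simp_rw [sandwich_sandwich]
  exact σ.tendsto_sandwich P (hS a).1 tendsto_const_nhds tendsto_const_nhds (hS b).1 x

variable (σ P Q) [IsScalarTower ℂ T T] [SMulCommClass ℂ T T] [CompleteSpace X]

theorem exists_isLeftActionLimit (hneo : ∀ x : X, ∃ (u v : T) (y : X), x = σ.L u (σ.R v y))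
    (hS : IsBAI S) : ∃ τ, σ.IsLeftActionLimit P Q S τ := by
  refine Q.exists_lift_tendsto (M := fun i => σ.sandwichLeft P (S.z i))
    (K := ‖σ.L‖ * ‖σ.R‖ * (S.C * S.C)) (mul_nonneg (by positivity) (mul_self_nonneg _))
    (fun i a b => ?_) fun a b x => ?_
  · have he := mul_self_le_mul_self (norm_nonneg _) (S.bdd i)
    calc ‖σ.sandwich P a (S.z i) (S.z i) b‖
        ≤ ‖σ.L‖ * ‖σ.R‖ * (‖a‖ * ‖S.z i‖) * (‖S.z i‖ * ‖b‖) := σ.norm_sandwich_le P _ _ _ _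
      _ = ‖σ.L‖ * ‖σ.R‖ * (‖S.z i‖ * ‖S.z i‖) * ‖a‖ * ‖b‖ := by ring
      _ ≤ ‖σ.L‖ * ‖σ.R‖ * (S.C * S.C) * ‖a‖ * ‖b‖ := by gcongr
  · exact σ.exists_tendsto_L_R hneo
      (P.exists_tendsto_ι_mul (s := fun _ => a)
        (fun i => mul_le_mul_of_nonneg_left (S.bdd i) (norm_nonneg a))
        (fun p => ⟨_, tendsto_const_nhds⟩) (fun q => ⟨_, hS.tendsto_op_mul q⟩))
      (P.exists_tendsto_mul_ι (t := fun _ => op b)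
        (fun i => mul_le_mul_of_nonneg_right (S.bdd i) (norm_nonneg b))
        (fun p => ⟨_, (hS p).1⟩) (fun q => ⟨_, tendsto_const_nhds⟩)) x

theorem exists_isRightActionLimit (hneo : ∀ x : X, ∃ (u v : T) (y : X), x = σ.L u (σ.R v y))
    (hS : IsBAI S) : ∃ τ, σ.IsRightActionLimit P Q S τ := by
  refine Q.exists_lift_tendsto (M := fun i => σ.sandwichRight P (S.z i))
    (K := ‖σ.L‖ * ‖σ.R‖ * (S.C * S.C)) (mul_nonneg (by positivity) (mul_self_nonneg _))
    (fun i a b => ?_) fun a b x => ?_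
  · have he := mul_self_le_mul_self (norm_nonneg _) (S.bdd i)
    calc ‖σ.sandwich P (S.z i) b a (S.z i)‖
        ≤ ‖σ.L‖ * ‖σ.R‖ * (‖S.z i‖ * ‖b‖) * (‖a‖ * ‖S.z i‖) := σ.norm_sandwich_le P _ _ _ _
      _ = ‖σ.L‖ * ‖σ.R‖ * (‖S.z i‖ * ‖S.z i‖) * ‖a‖ * ‖b‖ := by ring
      _ ≤ ‖σ.L‖ * ‖σ.R‖ * (S.C * S.C) * ‖a‖ * ‖b‖ := by gcongr
  · exact σ.exists_tendsto_L_R hneo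
      (P.exists_tendsto_ι_mul (t := fun _ => op b)
        (fun i => mul_le_mul_of_nonneg_right (S.bdd i) (norm_nonneg b))
        (fun p => ⟨_, (hS p).2⟩) (fun q => ⟨_, tendsto_const_nhds⟩))
      (P.exists_tendsto_mul_ι (s := fun _ => a)
        (fun i => mul_le_mul_of_nonneg_left (S.bdd i) (norm_nonneg a))
        (fun p => ⟨_, tendsto_const_nhds⟩) (fun q => ⟨_, hS.tendsto_mul_op q⟩)) x

end Sandwich

variable {A B T X : Type*} [NonUnitalNormedRing A] [NormedSpace ℂ A] [NonUnitalNormedRing B]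
  [NormedSpace ℂ B] [NonUnitalNormedRing T] [NormedSpace ℂ T] [IsScalarTower ℂ T T]
  [SMulCommClass ℂ T T] [CompleteSpace T] [NormedAddCommGroup X] [NormedSpace ℂ X]

def ofTensor (Q : IsProjTensorProduct A B T) (L R : T →L[ℂ] X →L[ℂ] X)
    (hL : ∀ a b c d, L (Q.ι (a * c) (b * d)) = (L (Q.ι a b)).comp (L (Q.ι c d)))
    (hR : ∀ a b c d, R (Q.ι (a * c) (b * d)) = (R (Q.ι c d)).comp (R (Q.ι a b)))
    (hLR : ∀ a b c d x, R (Q.ι c d) (L (Q.ι a b) x) = L (Q.ι a b) (R (Q.ι c d) x)) :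
    BanachBimodule T X where
  L := L
  R := R
  L_mul s t := by
    have h := Q.ext₂
      (f := (ContinuousLinearMap.compL ℂ T T _ L).comp (ContinuousLinearMap.mul ℂ T))
      (g := (ContinuousLinearMap.compL ℂ X X X).bilinearComp L L)
      fun a b c d => by simpa [Q.ι_mul] using hL a b c d
    simpa using congr($h s t)
  R_mul s t := by
    have h := Q.ext₂
      (f := (ContinuousLinearMap.compL ℂ T T _ R).comp (ContinuousLinearMap.mul ℂ T))
      (g := (ContinuousLinearMap.compL ℂ X X X).flip.bilinearComp R R)
      fun a b c d => by simpa [Q.ι_mul] using hR a b c d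
    simpa using congr($h s t)
  LR_comm s t x := by
    have h := Q.ext₂ (f := R.flip.comp (L.flip x))
      (g := L.bilinearComp (ContinuousLinearMap.id ℂ T) (R.flip x))
      fun a b c d => by simpa using hLR a b c d x
    simpa using congr($h s t)

end BanachBimodule

theorem stmt7_general {A T T' X : Type*} [NonUnitalNormedRing A] [NormedSpace ℂ A] [NonUnitalNormedRing T] [NormedSpace ℂ T] [IsScalarTower ℂ T T] [SMulCommClass ℂ T T] [CompleteSpace T] [NonUnitalNormedRing T'] [NormedSpace ℂ T'] [IsScalarTower ℂ T' T'] [SMulCommClass ℂ T' T'] [CompleteSpace T']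
    [NormedAddCommGroup X] [NormedSpace ℂ X] [CompleteSpace X]
    (P : IsProjTensorProduct A Aᵐᵒᵖ T) (Q : IsProjTensorProduct A A T')
    (S : BddNet A) (hS : IsBAI S)
    (σ : BanachBimodule T X)
    (hneo : ∀ x : X, ∃ (u v : T) (y : X), x = σ.L u (σ.R v y)) :
    ∃ τ : BanachBimodule T' X, ∀ (a b : A) (x : X),
      Filter.Tendsto
        (fun i => σ.L (P.ι a (MulOpposite.op (S.z i))) (σ.R (P.ι (S.z i) (MulOpposite.op b)) x))
        S.filter (nhds (τ.L (Q.ι a b) x)) ∧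
      Filter.Tendsto
        (fun i => σ.L (P.ι (S.z i) (MulOpposite.op b)) (σ.R (P.ι a (MulOpposite.op (S.z i))) x))
        S.filter (nhds (τ.R (Q.ι a b) x)) := by
  obtain ⟨τL, hτL⟩ := σ.exists_isLeftActionLimit P Q hneo hS
  obtain ⟨τR, hτR⟩ := σ.exists_isRightActionLimit P Q hneo hS
  refine ⟨.ofTensor Q τL τR (hτL.map_mul hS) (hτR.map_mul hS) fun a b c d x => ?_,
    fun a b x => ⟨hτL a b x, hτR a b x⟩⟩
  rw [BanachBimodule.right_action_left_action hτL hτR hS,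
    BanachBimodule.left_action_right_action hτL hτR hS]

/-- for a bounded approximate identity `(e_i)` of `A` and a neo-unital
Banach `A ⊗̂ Aᵒᵖ`-bimodule `X` (action `•`, encoded by `σ`), the limits
`(a⊗b)∘x = lim_i (a⊗e_i)•x•(e_i⊗b)` and `x∘(a⊗b) = lim_i (e_i⊗b)•x•(a⊗e_i)` exist and
define a Banach `A ⊗̂ A`-bimodule structure `τ` on `X`. -/
theorem stmt7 {A T T' X : Type*} [NonUnitalNormedRing A] [NormedSpace ℂ A] [IsScalarTower ℂ A A] [SMulCommClass ℂ A A] [CompleteSpace A] [NonUnitalNormedRing T] [NormedSpace ℂ T] [IsScalarTower ℂ T T] [SMulCommClass ℂ T T] [CompleteSpace T] [NonUnitalNormedRing T'] [NormedSpace ℂ T'] [IsScalarTower ℂ T' T'] [SMulCommClass ℂ T' T'] [CompleteSpace T']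
    [NormedAddCommGroup X] [NormedSpace ℂ X] [CompleteSpace X]
    (P : IsProjTensorProduct A Aᵐᵒᵖ T) (Q : IsProjTensorProduct A A T')
    (S : BddNet A) (hS : IsBAI S)
    (σ : BanachBimodule T X)
    (hneo : ∀ x : X, ∃ (u v : T) (y : X), x = σ.L u (σ.R v y)) :
    ∃ τ : BanachBimodule T' X, ∀ (a b : A) (x : X),
      Filter.Tendsto
        (fun i => σ.L (P.ι a (MulOpposite.op (S.z i))) (σ.R (P.ι (S.z i) (MulOpposite.op b)) x))
        S.filter (nhds (τ.L (Q.ι a b) x)) ∧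
      Filter.Tendsto
        (fun i => σ.L (P.ι (S.z i) (MulOpposite.op b)) (σ.R (P.ι a (MulOpposite.op (S.z i))) x))
        S.filter (nhds (τ.R (Q.ι a b) x)) :=
  stmt7_general P Q S hS σ hneo
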